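/- arXiv:2204.02913 — 5 statements merged into one kernel-verified Lean document; each statement's English description precedes it below -/
import Mathlib

section
/- If S ⊆ ℤ \ {0} is finite with |S| = d ≥ 2, then the domination ratio of the integer distance digraph Γ(ℤ, S) satisfies 1/(d+1) ≤ γ̄(ℤ, S) ≤ 1/2. -/
open Filter

/-- Lower density of a set of integers. -/
noncomputable def lowerDensity (D : Set ℤ) : ℝ :=
  Filter.liminf (fun n : ℕ =>
    ((D ∩ Set.Icc (-(n : ℤ)) (n : ℤ)).ncard : ℝ) / (2 * (n : ℝ) + 1)) Filter.atTop

/-- `D` is a dominating set of the integer distance digraph `Γ(ℤ,S)`. -/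
def Dominating (S D : Set ℤ) : Prop :=
  ∀ m : ℤ, m ∈ D ∨ ∃ u ∈ D, ∃ s ∈ S, m = u + s

/-- Domination ratio of `Γ(ℤ,S)`. -/
noncomputable def dominationRatio (S : Set ℤ) : ℝ :=
  sInf (lowerDensity '' {D : Set ℤ | Dominating S D})

/-- `D` is an efficient dominating set of `Γ(ℤ,S)`: every integer is dominated
by exactly one element of `D`. -/
def EffDominating (S D : Set ℤ) : Prop :=
  ∀ m : ℤ, ∃! u, u ∈ D ∧ (u = m ∨ m - u ∈ S)

/-! Each `u ∈ D` dominates only `u` and the `d` integers `u + s`, so covering a window of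
length `2n + 1` needs at least `(2n + 1)/(d + 1)` elements of `D`, up to a boundary error
bounded by `max |s|` that vanishes in the density. For the upper bound fix `s ∈ S` and take
the integers `m` with `m / s` even (alternating blocks of length `|s|`): every integer outside
this set is `m + s` for such an `m`, and translation by `s` maps the set injectively into its
complement, so its density is at most `1/2`. -/

open Set
open scoped Pointwise Topology

lemma ncard_Icc_int (a b : ℤ) : (Icc a b).ncard = (b + 1 - a).toNat := by
  rw [← Finset.coe_Icc, ncard_coe_finset, Int.card_Icc]

lemma ncard_Icc_neg_natCast (n : ℕ) : (Icc (-(n : ℤ)) n).ncard = 2 * n + 1 := by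
  rw [ncard_Icc_int]
  omega

lemma ncard_inter_Icc_sub_add_le (X : Set ℤ) (n M : ℕ) :
    (X ∩ Icc (-(n : ℤ) - M) (n + M)).ncard ≤ (X ∩ Icc (-(n : ℤ)) n).ncard + 2 * M := by
  have hsub : Icc (-(n : ℤ)) n ⊆ Icc (-(n : ℤ) - M) (n + M) := Icc_subset_Icc (by omega) (by omega)
  have hframe : (Icc (-(n : ℤ) - M) (n + M) \ Icc (-(n : ℤ)) n).ncard = 2 * M := by
    rw [ncard_sdiff hsub, ncard_Icc_int, ncard_Icc_int]
    omega
  calc (X ∩ Icc (-(n : ℤ) - M) (n + M)).ncard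
      ≤ ((X ∩ Icc (-(n : ℤ) - M) (n + M)) \ (X ∩ Icc (-(n : ℤ)) n)).ncard
          + (X ∩ Icc (-(n : ℤ)) n).ncard :=
        ncard_le_ncard_sdiff_add_ncard _ _ ((finite_Icc _ _).inter_of_right _)
    _ ≤ 2 * M + (X ∩ Icc (-(n : ℤ)) n).ncard := by
        gcongr
        rw [← hframe]
        exact ncard_le_ncard (fun x hx => ⟨hx.1.2, fun h => hx.2 ⟨hx.1.1, h⟩⟩) (toFinite _)
    _ = (X ∩ Icc (-(n : ℤ)) n).ncard + 2 * M := add_comm _ _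

lemma tendsto_add_div_two_mul_add_one (a C : ℝ) :
    Tendsto (fun n : ℕ => a + C / (2 * n + 1)) atTop (𝓝 a) := by
  have h : Tendsto (fun n : ℕ => (2 * n + 1 : ℝ)) atTop atTop :=
    tendsto_atTop_add_const_right _ 1 (tendsto_natCast_atTop_atTop.const_mul_atTop two_pos)
  simpa using tendsto_const_nhds.add (tendsto_const_nhds.div_atTop h)

lemma le_lowerDensity_of_forall {D : Set ℤ} (a C : ℝ)
    (h : ∀ n : ℕ, a * (2 * n + 1) ≤ (D ∩ Icc (-(n : ℤ)) n).ncard + C) :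
    a ≤ lowerDensity D := by
  have hle : ∀ n : ℕ, a + (-C) / (2 * n + 1) ≤
      (D ∩ Icc (-(n : ℤ)) n).ncard / (2 * (n : ℝ) + 1) := by
    intro n
    rw [neg_div, ← sub_eq_add_neg, le_div_iff₀ (by positivity), sub_mul,
      div_mul_cancel₀ _ (by positivity)]
    linarith [h n]
  have hbdd : ∀ n : ℕ, ((D ∩ Icc (-(n : ℤ)) n).ncard : ℝ) / (2 * n + 1) ≤ 1 := by
    intro n
    rw [div_le_one (by positivity)]
    exact_mod_cast (ncard_le_ncard inter_subset_right (finite_Icc _ _)).trans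
      (ncard_Icc_neg_natCast n).le
  rw [← (tendsto_add_div_two_mul_add_one a (-C)).liminf_eq]
  exact liminf_le_liminf (Eventually.of_forall hle)
    (tendsto_add_div_two_mul_add_one a (-C)).isBoundedUnder_ge (isCoboundedUnder_ge_of_le _ hbdd)

lemma lowerDensity_le_of_forall {D : Set ℤ} (a C : ℝ)
    (h : ∀ n : ℕ, ((D ∩ Icc (-(n : ℤ)) n).ncard : ℝ) ≤ a * (2 * n + 1) + C) :
    lowerDensity D ≤ a := by
  have hle : ∀ n : ℕ, ((D ∩ Icc (-(n : ℤ)) n).ncard : ℝ) / (2 * n + 1) ≤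
      a + C / (2 * n + 1) := by
    intro n
    rw [div_le_iff₀ (by positivity), add_mul, div_mul_cancel₀ _ (by positivity)]
    exact h n
  rw [← (tendsto_add_div_two_mul_add_one a C).liminf_eq]
  exact liminf_le_liminf (Eventually.of_forall hle) (isBoundedUnder_of ⟨0, fun n => by positivity⟩)
    (tendsto_add_div_two_mul_add_one a C).isCoboundedUnder_ge

lemma inv_ncard_le_lowerDensity {D T : Set ℤ} (hT : T.Finite) (hD : D + T = univ) :
    (T.ncard : ℝ)⁻¹ ≤ lowerDensity D := by
  obtain ⟨M, hM⟩ := (hT.image Int.natAbs).bddAbove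
  refine le_lowerDensity_of_forall _ (2 * M) fun n => ?_
  have hcover : Icc (-(n : ℤ)) n ⊆ (D ∩ Icc (-(n : ℤ) - M) (n + M)) + T := by
    rintro m ⟨hm₁, hm₂⟩
    obtain ⟨u, hu, t, ht, rfl⟩ := mem_add.1 (hD ▸ mem_univ m)
    have htM : t.natAbs ≤ M := hM (mem_image_of_mem _ ht)
    exact ⟨u, ⟨hu, by omega, by omega⟩, t, ht, rfl⟩
  have hcount : 2 * n + 1 ≤ T.ncard * ((D ∩ Icc (-(n : ℤ)) n).ncard + 2 * M) :=
    calc 2 * n + 1 = (Icc (-(n : ℤ)) n).ncard := (ncard_Icc_neg_natCast n).symm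
      _ ≤ ((D ∩ Icc (-(n : ℤ) - M) (n + M)) + T).ncard :=
          ncard_le_ncard hcover (((finite_Icc _ _).inter_of_right _).add hT)
      _ ≤ (D ∩ Icc (-(n : ℤ) - M) (n + M)).ncard * T.ncard := natCard_add_le
      _ ≤ ((D ∩ Icc (-(n : ℤ)) n).ncard + 2 * M) * T.ncard :=
          Nat.mul_le_mul_right _ (ncard_inter_Icc_sub_add_le D n M)
      _ = _ := mul_comm _ _
  exact inv_mul_le_of_le_mul₀ (by positivity) (by positivity) (by exact_mod_cast hcount)

lemma lowerDensity_le_half_of_add_notMem {D : Set ℤ} (s : ℤ) (hD : ∀ x ∈ D, x + s ∉ D) :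
    lowerDensity D ≤ 1 / 2 := by
  refine lowerDensity_le_of_forall _ s.natAbs fun n => ?_
  have hshift : (D ∩ Icc (-(n : ℤ)) n).ncard ≤
      (Dᶜ ∩ Icc (-(n : ℤ) - s.natAbs) (n + s.natAbs)).ncard := by
    refine ncard_le_ncard_of_injOn (· + s) ?_ (add_left_injective s).injOn
    rintro x ⟨hx, hx₁, hx₂⟩
    exact ⟨hD x hx, by omega, by omega⟩
  have hsplit := ncard_inter_add_ncard_sdiff_eq_ncard (Icc (-(n : ℤ)) n) D
  rw [inter_comm, sdiff_eq_compl_inter, ncard_Icc_neg_natCast] at hsplit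
  have hcount : 2 * (D ∩ Icc (-(n : ℤ)) n).ncard ≤ 2 * n + 1 + 2 * s.natAbs := by
    have := ncard_inter_Icc_sub_add_le Dᶜ n s.natAbs
    omega
  have hcount' : (2 * (D ∩ Icc (-(n : ℤ)) n).ncard : ℝ) ≤ 2 * n + 1 + 2 * s.natAbs := by
    exact_mod_cast hcount
  linarith

lemma even_add_self_ediv_iff {x s : ℤ} (hs : s ≠ 0) : Even ((x + s) / s) ↔ ¬Even (x / s) := by
  rw [Int.add_ediv_of_dvd_right dvd_rfl, Int.ediv_self hs, Int.even_add_one]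

lemma dominating_setOf_even_ediv {S : Set ℤ} {s : ℤ} (hs : s ∈ S) (hs0 : s ≠ 0) :
    Dominating S {m | Even (m / s)} := by
  intro m
  by_cases hm : Even (m / s)
  · exact Or.inl hm
  · refine Or.inr ⟨m - s, ?_, s, hs, (sub_add_cancel m s).symm⟩
    exact not_not.1 <| (even_add_self_ediv_iff hs0).not.1 <| by rwa [sub_add_cancel]

lemma Dominating.add_insert_zero_eq_univ {S D : Set ℤ} (hD : Dominating S D) :
    D + insert 0 S = univ := by
  refine eq_univ_of_forall fun m => ?_
  rcases hD m with hm | ⟨u, hu, s, hs, rfl⟩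
  · exact ⟨m, hm, 0, mem_insert _ _, add_zero m⟩
  · exact ⟨u, hu, s, mem_insert_of_mem _ hs, rfl⟩

theorem stmt_3 (S : Set ℤ) (d : ℕ) (hS : S.Finite) (h0 : 0 ∉ S)
    (hcard : S.ncard = d) (hd : 2 ≤ d) :
    1 / ((d : ℝ) + 1) ≤ dominationRatio S ∧ dominationRatio S ≤ 1 / 2 := by
  have hlower : ∀ D, Dominating S D → 1 / ((d : ℝ) + 1) ≤ lowerDensity D := by
    intro D hD
    have hcard₀ : ((insert 0 S).ncard : ℝ) = d + 1 := by
      rw [ncard_insert_of_notMem h0 hS, hcard, Nat.cast_succ]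
    rw [one_div, ← hcard₀]
    exact inv_ncard_le_lowerDensity (hS.insert 0) hD.add_insert_zero_eq_univ
  have hbdd : BddBelow (lowerDensity '' {D | Dominating S D}) := ⟨_, forall_mem_image.2 hlower⟩
  have hne : (lowerDensity '' {D | Dominating S D}).Nonempty :=
    ⟨_, mem_image_of_mem _ (fun m => Or.inl (mem_univ m) : Dominating S univ)⟩
  obtain ⟨s, hs⟩ := nonempty_of_ncard_ne_zero (by omega : S.ncard ≠ 0)
  have hs0 : s ≠ 0 := ne_of_mem_of_not_mem hs h0
  refine ⟨le_csInf hne (forall_mem_image.2 hlower), ?_⟩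
  calc dominationRatio S ≤ lowerDensity {m | Even (m / s)} :=
        csInf_le hbdd (mem_image_of_mem _ (dominating_setOf_even_ediv hs hs0))
    _ ≤ 1 / 2 := lowerDensity_le_half_of_add_notMem s fun x hx h =>
        (even_add_self_ediv_iff hs0).1 h hx
end

section
/- Let S ⊆ ℤ \ {0} be finite and let d ≥ 1 divide every element of S. Then γ̄(ℤ, S/d) = γ̄(ℤ, S), where S/d = {s/d : s ∈ S}. -/
open Filter

/-!
Cut `ℤ` into the residue classes `d ℤ + r`, `0 ≤ r < d`. If `D` dominates `Γ(ℤ,S)`, every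
slice `{e | d e + r ∈ D}` dominates `Γ(ℤ,S/d)`, and on the window `[-n, n]` the `d` slices
together count about `d` times as many points as `D`; by superadditivity of `liminf` one slice
has lower density at most that of `D`. Conversely, if `E` dominates `Γ(ℤ,S/d)`, its blow-up
`{x | x / d ∈ E}` dominates `Γ(ℤ,S)`, and its points in `[-dm, dm]` are at most `d` times
those of `E` in `[-m, m]`.
-/

open Topology

section Liminf

variable {α β : Type*} {f : Filter α}

theorem sum_liminf_le_liminf_sum [f.NeBot] {κ : Type*} (s : Finset κ) {u : κ → α → ℝ}
    (hle : ∀ k ∈ s, f.IsBoundedUnder (· ≤ ·) (u k))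
    (hge : ∀ k ∈ s, f.IsBoundedUnder (· ≥ ·) (u k)) :
    ∑ k ∈ s, liminf (u k) f ≤ liminf (∑ k ∈ s, u k) f := by
  classical
  induction s using Finset.induction_on with
  | empty => simp [Pi.zero_def, liminf_const]
  | insert a s ha ih =>
    have hle' k (hk : k ∈ s) := hle k (Finset.mem_insert_of_mem hk)
    have hge' k (hk : k ∈ s) := hge k (Finset.mem_insert_of_mem hk)
    rw [Finset.sum_insert ha, Finset.sum_insert ha]
    calc liminf (u a) f + ∑ k ∈ s, liminf (u k) f
        ≤ liminf (u a) f + liminf (∑ k ∈ s, u k) f := by gcongr; exact ih hle' hge'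
      _ ≤ liminf (u a + ∑ k ∈ s, u k) f :=
        le_liminf_add (hge a (s.mem_insert_self a)) (hle a (s.mem_insert_self a))
          (isBoundedUnder_ge_sum s hge') (isBoundedUnder_le_sum s hle').isCoboundedUnder_ge

theorem liminf_le_liminf_of_comp_le_add [f.NeBot] {g : Filter β} {u : β → ℝ} {v ε : α → ℝ}
    {ψ : α → β} (hu : g.IsBoundedUnder (· ≥ ·) u) (hu' : g.IsBoundedUnder (· ≤ ·) u)
    (hv : f.IsBoundedUnder (· ≥ ·) v) (hv' : f.IsBoundedUnder (· ≤ ·) v)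
    (hψ : Tendsto ψ f g) (hε : Tendsto ε f (𝓝 0)) (h : ∀ᶠ x in f, u (ψ x) ≤ v x + ε x) :
    liminf u g ≤ liminf v f := by
  have huψ : f.IsBoundedUnder (· ≥ ·) (u ∘ ψ) := (hu.mono hψ :)
  calc liminf u g ≤ liminf (u ∘ ψ) f := by
        rw [liminf_comp]
        exact liminf_le_liminf_of_le hψ hu (hu'.mono hψ).isCoboundedUnder_ge
    _ ≤ liminf (ε + v) f :=
        liminf_le_liminf (h.mono fun x hx => by simpa [add_comm] using hx) huψ
          (isBoundedUnder_le_add hε.isBoundedUnder_le hv').isCoboundedUnder_ge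
    _ ≤ limsup ε f + liminf v f :=
        liminf_add_le hε.isBoundedUnder_ge hε.isBoundedUnder_le hv hv'.isCoboundedUnder_ge
    _ = liminf v f := by rw [hε.limsup_eq, zero_add]

end Liminf

open Classical in
theorem ncard_inter_Icc_eq_card_filter (A : Set ℤ) (a b : ℤ) :
    (A ∩ Set.Icc a b).ncard = ((Finset.Icc a b).filter (· ∈ A)).card := by
  rw [← Set.ncard_coe_finset]
  congr 1
  ext x
  simp [and_comm]

theorem ncard_inter_Icc_neg_le (A : Set ℤ) (n : ℕ) :
    (A ∩ Set.Icc (-(n : ℤ)) n).ncard ≤ 2 * n + 1 := by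
  classical
  rw [ncard_inter_Icc_eq_card_filter]
  refine (Finset.card_filter_le _ _).trans ?_
  rw [Int.card_Icc]
  omega

/-- `lowerDensity A` is by definition the `liminf` of this sequence. -/
noncomputable def windowDensity (A : Set ℤ) (n : ℕ) : ℝ :=
  ((A ∩ Set.Icc (-(n : ℤ)) n).ncard : ℝ) / (2 * n + 1)

theorem windowDensity_nonneg (A : Set ℤ) (n : ℕ) : 0 ≤ windowDensity A n := by
  unfold windowDensity
  positivity

theorem windowDensity_le_one (A : Set ℤ) (n : ℕ) : windowDensity A n ≤ 1 := by
  rw [windowDensity, div_le_one (by positivity)]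
  exact_mod_cast ncard_inter_Icc_neg_le A n

theorem isBoundedUnder_le_windowDensity (A : Set ℤ) (f : Filter ℕ) :
    f.IsBoundedUnder (· ≤ ·) (windowDensity A) :=
  isBoundedUnder_of ⟨1, windowDensity_le_one A⟩

theorem isBoundedUnder_ge_windowDensity (A : Set ℤ) (f : Filter ℕ) :
    f.IsBoundedUnder (· ≥ ·) (windowDensity A) :=
  isBoundedUnder_of ⟨0, windowDensity_nonneg A⟩

theorem lowerDensity_nonneg (A : Set ℤ) : 0 ≤ lowerDensity A :=
  le_liminf_of_le (isBoundedUnder_le_windowDensity A atTop).isCoboundedUnder_ge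
    (Eventually.of_forall (windowDensity_nonneg A))

theorem dominationRatio_le_of_forall_exists {S T : Set ℤ}
    (h : ∀ D, Dominating T D → ∃ E, Dominating S E ∧ lowerDensity E ≤ lowerDensity D) :
    dominationRatio S ≤ dominationRatio T :=
  le_csInf ⟨_, Set.univ, fun _ => Or.inl trivial, rfl⟩ fun _ ⟨D, hD, hx⟩ => by
    obtain ⟨E, hE, hED⟩ := h D hD
    exact csInf_le_of_le ⟨0, fun _ ⟨A, _, hA⟩ => hA ▸ lowerDensity_nonneg A⟩ ⟨E, hE, rfl⟩
      (hx ▸ hED)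

theorem Dominating.preimage_mul_add {S D : Set ℤ} {d : ℤ} (hdvd : ∀ s ∈ S, d ∣ s)
    (hD : Dominating S D) (r : ℤ) :
    Dominating ((fun s => s / d) '' S) ((fun e => d * e + r) ⁻¹' D) := by
  intro m
  rcases hD (d * m + r) with h | ⟨u, hu, s, hs, hm⟩
  · exact Or.inl h
  · refine Or.inr ⟨m - s / d, ?_, s / d, ⟨s, hs, rfl⟩, by ring⟩
    have hsd : d * (s / d) = s := Int.mul_ediv_cancel' (hdvd s hs)
    show d * (m - s / d) + r ∈ D
    convert hu using 1
    linear_combination hm - hsd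

theorem Dominating.preimage_ediv {S E : Set ℤ} {d : ℤ} (hd : 0 < d) (hdvd : ∀ s ∈ S, d ∣ s)
    (hE : Dominating ((fun s => s / d) '' S) E) :
    Dominating S ((fun x => x / d) ⁻¹' E) := by
  intro x
  rcases hE (x / d) with h | ⟨u, hu, _, ⟨s, hs, rfl⟩, hx⟩
  · exact Or.inl h
  · refine Or.inr ⟨d * u + x % d, ?_, s, hs, ?_⟩
    · show (d * u + x % d) / d ∈ E
      rwa [((Int.ediv_emod_unique hd).2 ⟨add_comm _ _, Int.emod_nonneg x hd.ne',
        Int.emod_lt_of_pos x hd⟩).1]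
    · have hsd : d * (s / d) = s := Int.mul_ediv_cancel' (hdvd s hs)
      linear_combination (Int.mul_ediv_add_emod x d).symm + d * hx + hsd

theorem sum_ncard_preimage_mul_add_inter_Icc (D : Set ℤ) {d : ℤ} (hd : 0 < d) (a b : ℤ) :
    ∑ r ∈ Finset.Ico 0 d, ((fun e => d * e + r) ⁻¹' D ∩ Set.Icc a b).ncard
      = (D ∩ Set.Icc (d * a) (d * b + d - 1)).ncard := by
  classical
  simp only [ncard_inter_Icc_eq_card_filter]
  calc ∑ r ∈ Finset.Ico 0 d, ((Finset.Icc a b).filter (· ∈ (fun e => d * e + r) ⁻¹' D)).card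
      = ((Finset.Icc a b ×ˢ Finset.Ico 0 d).filter (fun p => d * p.1 + p.2 ∈ D)).card := by
        simp only [Finset.card_filter, Finset.sum_product_right, Set.mem_preimage]
    _ = _ := ?_
  refine Finset.card_nbij' (fun p => d * p.1 + p.2) (fun x => (x / d, x % d)) ?_ ?_ ?_ ?_
  · rintro ⟨e, r⟩ h
    simp only [Finset.coe_filter, Finset.mem_product, Finset.mem_Icc, Finset.mem_Ico] at h ⊢
    obtain ⟨⟨⟨hae, heb⟩, hr0, hrd⟩, hD⟩ := h
    exact ⟨⟨by nlinarith, by nlinarith⟩, hD⟩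
  · intro x h
    simp only [Finset.coe_filter, Finset.mem_product, Finset.mem_Icc, Finset.mem_Ico] at h ⊢
    obtain ⟨⟨hax, hxb⟩, hD⟩ := h
    refine ⟨⟨⟨(Int.le_ediv_iff_mul_le hd).2 (by linarith),
      Int.lt_add_one_iff.1 ((Int.ediv_lt_iff_lt_mul hd).2 (by linarith))⟩,
      Int.emod_nonneg x hd.ne', Int.emod_lt_of_pos x hd⟩, ?_⟩
    rwa [Int.mul_ediv_add_emod]
  · rintro ⟨e, r⟩ h
    simp only [Finset.coe_filter, Finset.mem_product, Finset.mem_Icc, Finset.mem_Ico] at h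
    simp only [Prod.mk.injEq]
    exact (Int.ediv_emod_unique hd).2 ⟨by ring, h.1.2⟩
  · intro x _
    exact Int.mul_ediv_add_emod x d

theorem sum_ncard_preimage_mul_add_inter_Icc_le (D : Set ℤ) {d : ℕ} (hd : 0 < d) {m n : ℕ}
    (hmn : d * (m + 1) ≤ n) :
    ∑ r ∈ Finset.Ico 0 (d : ℤ), ((fun e => (d : ℤ) * e + r) ⁻¹' D ∩ Set.Icc (-(m : ℤ)) m).ncard
      ≤ (D ∩ Set.Icc (-(n : ℤ)) n).ncard := by
  have hmnZ : (d : ℤ) * (m + 1) ≤ n := by exact_mod_cast hmn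
  rw [sum_ncard_preimage_mul_add_inter_Icc _ (by exact_mod_cast hd)]
  refine Set.ncard_le_ncard (Set.inter_subset_inter_right _ (Set.Icc_subset_Icc ?_ ?_))
    (Set.finite_Icc _ _ |>.inter_of_right _) <;> nlinarith

theorem liminf_sum_windowDensity_preimage_mul_add_le (D : Set ℤ) {d : ℕ} (hd : 0 < d) :
    liminf (∑ r ∈ Finset.Ico 0 (d : ℤ), windowDensity ((fun e => (d : ℤ) * e + r) ⁻¹' D)) atTop
      ≤ d * lowerDensity D := by
  have hψ : Tendsto (fun n => n / d - 1) atTop atTop :=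
    (tendsto_sub_atTop_nat 1).comp (Nat.tendsto_div_const_atTop hd.ne')
  change _ ≤ d * liminf (windowDensity D) atTop
  rw [(monotone_mul_left_of_nonneg (Nat.cast_nonneg d)).map_liminf_of_continuousAt _
    (continuous_const_mul _).continuousAt
    (isBoundedUnder_le_windowDensity D atTop).isCoboundedUnder_ge
    (isBoundedUnder_ge_windowDensity D atTop)]
  refine liminf_le_liminf_of_comp_le_add
    (isBoundedUnder_ge_sum _ fun r _ => isBoundedUnder_ge_windowDensity _ _)
    (isBoundedUnder_le_sum _ fun r _ => isBoundedUnder_le_windowDensity _ _)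
    (isBoundedUnder_of ⟨0, fun n => mul_nonneg (Nat.cast_nonneg d) (windowDensity_nonneg D n)⟩)
    (isBoundedUnder_of ⟨d, fun n =>
      mul_le_of_le_one_right (Nat.cast_nonneg d) (windowDensity_le_one D n)⟩)
    hψ ((tendsto_const_div_atTop_nhds_zero_nat (3 * d : ℝ)).comp hψ)
    (eventually_ge_atTop (2 * d) |>.mono fun n hn => ?_)
  -- The `d` slices on `[-m, m]` fill `[-dm, dm + d - 1] ⊆ [-n, n]`, which misses `O(d)` points.
  set m := n / d - 1 with hm
  have hm1 : 1 ≤ m := by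
    have := (Nat.le_div_iff_mul_le hd).2 (by linarith : 2 * d ≤ n)
    omega
  have hmn : d * (m + 1) ≤ n := by
    rw [hm, Nat.sub_add_cancel (by omega)]
    exact Nat.mul_div_le n d
  have hnm : n + 1 ≤ d * (m + 2) := by
    have := Nat.lt_mul_div_succ n hd
    rw [hm, show n / d - 1 + 2 = n / d + 1 by omega]
    omega
  have hM := sum_ncard_preimage_mul_add_inter_Icc_le D hd hmn
  have hN := ncard_inter_Icc_neg_le D n
  simp only [Finset.sum_apply, windowDensity, Function.comp, ← Finset.sum_div, ← Nat.cast_sum,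
    ← hm]
  generalize (D ∩ Set.Icc (-(n : ℤ)) n).ncard = N at hM hN ⊢
  generalize (∑ r ∈ Finset.Ico 0 (d : ℤ), _ : ℕ) = M at hM ⊢
  have hM' : (M : ℝ) ≤ N := by exact_mod_cast hM
  have hN' : (N : ℝ) ≤ 2 * n + 1 := by exact_mod_cast hN
  have hm1' : (1 : ℝ) ≤ m := by exact_mod_cast hm1
  have hmn' : (d : ℝ) * (m + 1) ≤ n := by exact_mod_cast hmn
  have hnm' : (n : ℝ) + 1 ≤ d * (m + 2) := by exact_mod_cast hnm
  rw [mul_div_assoc', div_add_div _ _ (by positivity) (by positivity),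
    div_le_div_iff₀ (by positivity) (by positivity)]
  nlinarith [mul_le_mul_of_nonneg_right hM' (by positivity : (0 : ℝ) ≤ (2 * n + 1) * m),
    mul_le_mul_of_nonneg_left (by linarith : 2 * n + 1 - d * (2 * m + 1) ≤ 3 * (d : ℝ))
      (by positivity : (0 : ℝ) ≤ N * m),
    mul_le_mul_of_nonneg_right hN' (by positivity : (0 : ℝ) ≤ 3 * d * m),
    (by positivity : (0 : ℝ) ≤ 3 * d * (2 * n + 1) * (m + 1))]

theorem exists_lowerDensity_preimage_mul_add_le (D : Set ℤ) {d : ℕ} (hd : 0 < d) :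
    ∃ r, lowerDensity ((fun e => (d : ℤ) * e + r) ⁻¹' D) ≤ lowerDensity D := by
  have hsum : ∑ r ∈ Finset.Ico 0 (d : ℤ), lowerDensity ((fun e => (d : ℤ) * e + r) ⁻¹' D)
      ≤ ∑ _r ∈ Finset.Ico 0 (d : ℤ), lowerDensity D := by
    rw [Finset.sum_const, Int.card_Ico, sub_zero, Int.toNat_natCast, nsmul_eq_mul]
    exact (sum_liminf_le_liminf_sum _ (fun r _ => isBoundedUnder_le_windowDensity _ _)
      (fun r _ => isBoundedUnder_ge_windowDensity _ _)).trans
      (liminf_sum_windowDensity_preimage_mul_add_le D hd)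
  obtain ⟨r, -, hr⟩ := Finset.exists_le_of_sum_le ⟨0, by simpa using hd⟩ hsum
  exact ⟨r, hr⟩

theorem ncard_preimage_ediv_inter_Icc_le (E : Set ℤ) {d : ℕ} (hd : 0 < d) (m : ℕ) :
    ((fun x => x / (d : ℤ)) ⁻¹' E ∩ Set.Icc (-((d * m : ℕ) : ℤ)) (d * m : ℕ)).ncard
      ≤ d * (E ∩ Set.Icc (-(m : ℤ)) m).ncard := by
  have hdZ : (0 : ℤ) < d := by exact_mod_cast hd
  have hslice (r : ℤ) (hr : r ∈ Finset.Ico 0 (d : ℤ)) :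
      (fun e => (d : ℤ) * e + r) ⁻¹' ((fun x => x / (d : ℤ)) ⁻¹' E) = E := by
    ext e
    rw [Finset.mem_Ico] at hr
    simp only [Set.mem_preimage, ((Int.ediv_emod_unique hdZ).2 ⟨add_comm _ _, hr⟩).1]
  calc _ ≤ ((fun x => x / (d : ℤ)) ⁻¹' E ∩ Set.Icc (d * -(m : ℤ)) (d * m + d - 1)).ncard := by
        refine Set.ncard_le_ncard (Set.inter_subset_inter_right _ (Set.Icc_subset_Icc ?_ ?_))
          (Set.finite_Icc _ _ |>.inter_of_right _)
        · push_cast; linarith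
        · push_cast; linarith
    _ = d * (E ∩ Set.Icc (-(m : ℤ)) m).ncard := by
        rw [← sum_ncard_preimage_mul_add_inter_Icc _ hdZ, Finset.sum_congr rfl
          fun r hr => by rw [hslice r hr], Finset.sum_const, Int.card_Ico, smul_eq_mul]
        simp

theorem lowerDensity_preimage_ediv_le (E : Set ℤ) {d : ℕ} (hd : 0 < d) :
    lowerDensity ((fun x => x / (d : ℤ)) ⁻¹' E) ≤ lowerDensity E := by
  refine liminf_le_liminf_of_comp_le_add (isBoundedUnder_ge_windowDensity _ _)
    (isBoundedUnder_le_windowDensity _ _) (isBoundedUnder_ge_windowDensity _ _)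
    (isBoundedUnder_le_windowDensity _ _) (ψ := (d * ·))
    (tendsto_id.const_mul_atTop' hd) tendsto_one_div_atTop_nhds_zero_nat
    (eventually_ge_atTop 1 |>.mono fun m hm => ?_)
  have hN' := ncard_preimage_ediv_inter_Icc_le E hd m
  have hN := ncard_inter_Icc_neg_le E m
  generalize ((fun x => x / (d : ℤ)) ⁻¹' E ∩ _).ncard = N' at hN' ⊢
  generalize (E ∩ Set.Icc (-(m : ℤ)) m).ncard = N at hN hN' ⊢
  have hN'R : (N' : ℝ) ≤ d * N := by exact_mod_cast hN'
  have hNR : (N : ℝ) ≤ 2 * m + 1 := by exact_mod_cast hN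
  have hm' : (1 : ℝ) ≤ m := by exact_mod_cast hm
  have hd' : (1 : ℝ) ≤ d := by exact_mod_cast hd
  rw [div_add_div _ _ (by positivity) (by positivity),
    div_le_div_iff₀ (by positivity) (by positivity)]
  push_cast
  nlinarith [mul_le_mul_of_nonneg_right hN'R (by positivity : (0 : ℝ) ≤ (2 * m + 1) * m),
    mul_le_mul_of_nonneg_right hNR (by nlinarith : (0 : ℝ) ≤ m * (d - 1))]

theorem stmt_6_general (S : Set ℤ) (d : ℤ) (hd : 1 ≤ d)
    (hdvd : ∀ s ∈ S, d ∣ s) :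
    dominationRatio ((fun s => s / d) '' S) = dominationRatio S := by
  lift d to ℕ using by omega
  have hd : 0 < d := by omega
  apply le_antisymm
  · refine dominationRatio_le_of_forall_exists fun D hD => ?_
    obtain ⟨r, hr⟩ := exists_lowerDensity_preimage_mul_add_le D hd
    exact ⟨_, hD.preimage_mul_add hdvd r, hr⟩
  · exact dominationRatio_le_of_forall_exists fun E hE =>
      ⟨_, hE.preimage_ediv (by omega) hdvd, lowerDensity_preimage_ediv_le E hd⟩

theorem stmt_6 (S : Set ℤ) (hS : S.Finite) (h0 : 0 ∉ S) (d : ℤ) (hd : 1 ≤ d)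
    (hdvd : ∀ s ∈ S, d ∣ s) :
    dominationRatio ((fun s => s / d) '' S) = dominationRatio S :=
  stmt_6_general S d hd hdvd
end

section
/- Let d ≥ 2 and s ∉ [0, d-2] be integers, and let D = {x_i : i ∈ ℤ} (with x_i < x_{i+1}) be a dominating set of Γ(ℤ, {1,2,…,d-2,s}) with blocks B_i = [x_i, x_{i+1}-1] of size b_i = x_{i+1}-x_i. Then for every i: (1) b_i ≤ s+1 if s > 0, and b_i ≤ -s+d-1 if s < 0; (2) if b_i ≥ d then D contains all of x_i - s + d - 1, x_i - s + d, …, x_i - s + b_i - 1. -/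
open Filter

/-- No element of the range lies strictly between two consecutive values. -/
private lemma gapAux (x : ℤ → ℤ) (hx : StrictMono x) {i k : ℤ}
    (h1 : x i < x k) (h2 : x k < x (i + 1)) : False := by
  have h3 : i < k := hx.lt_iff_lt.mp h1
  have h4 : i + 1 ≤ k := h3
  exact absurd (hx.monotone h4) (not_le.mpr h2)

private lemma keyAux (d s : ℤ) (hd : 2 ≤ d) (hs : s ∉ Set.Icc 0 (d - 2))
    (x : ℤ → ℤ) (hx : StrictMono x) (hD : Dominating (Set.Icc 1 (d - 2) ∪ {s}) (Set.range x))
    (i j : ℤ) (hj1 : d - 1 ≤ j) (hj2 : j ≤ x (i + 1) - x i - 1) :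
    x i - s + j ∈ Set.range x := by
  have hm1 : x i < x i + j := by omega
  have hm2 : x i + j < x (i + 1) := by omega
  rcases hD (x i + j) with ⟨k, hk⟩ | ⟨u, ⟨k, hk⟩, t, ht, hmu⟩
  · exact (gapAux x hx (show x i < x k by omega) (show x k < x (i + 1) by omega)).elim
  · rcases ht with ht | ht
    · exfalso
      simp only [Set.mem_Icc] at ht
      have h1 : x i < x k := by omega
      have h2 : x k < x (i + 1) := by omega
      exact gapAux x hx h1 h2
    · simp only [Set.mem_singleton_iff] at ht
      exact ⟨k, by omega⟩

theorem stmt_14 (d s : ℤ) (hd : 2 ≤ d) (hs : s ∉ Set.Icc 0 (d - 2))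
    (x : ℤ → ℤ) (hx : StrictMono x) (hD : Dominating (Set.Icc 1 (d - 2) ∪ {s}) (Set.range x)) :
    ∀ i : ℤ,
      (0 < s → x (i + 1) - x i ≤ s + 1) ∧
      (s < 0 → x (i + 1) - x i ≤ -s + d - 1) ∧
      (d ≤ x (i + 1) - x i →
        ∀ j : ℤ, d - 1 ≤ j → j ≤ x (i + 1) - x i - 1 → x i - s + j ∈ Set.range x) := by
  have hs' : ¬ (0 ≤ s ∧ s ≤ d - 2) := by simpa [Set.mem_Icc] using hs
  intro i
  refine ⟨?_, ?_, fun _ j hj1 hj2 => keyAux d s hd hs x hx hD i j hj1 hj2⟩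
  · intro hspos
    by_contra hb
    have hsd : d - 1 ≤ s := by omega
    obtain ⟨k, hk⟩ := keyAux d s hd hs x hx hD i (s + 1) (by omega) (by omega)
    exact gapAux x hx (i := i) (k := k) (by omega) (by omega)
  · intro hsneg
    by_contra hb
    obtain ⟨k, hk⟩ := keyAux d s hd hs x hx hD i (d - 1) (by omega) (by omega)
    have h1 : x i < x k := by omega
    have h2 : i + 1 ≤ k := hx.lt_iff_lt.mp h1
    have h3 : x (i + 1) ≤ x k := hx.monotone h2
    omega
end

section
/- For s ∈ {-3, -2, 5, 6}, the domination ratio of Γ(ℤ, {1,2,3,s}) equals 1/4. -/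
/-!
Covering the right end `m - 1, m - 2` of a window `[m - 8, m)` with offsets `{0, 1, 2, 3, s}`,
`s ∈ {5, 6}`, forces either a point of `D` in `[m - 4, m)` or two points in `[m - 8, m)`.
Peeling such blocks off the right end of `[-n, n]` gives at least about `n / 2` points of `D`
there, so every dominating set has lower density at least `1 / 4`. The reflection
`x ↦ -1 - x` turns the case `s ∈ {-3, -2}` into `3 - s ∈ {6, 5}`, and the multiples of `4`
dominate with density `1 / 4`.
-/

open Filter

open Set Topology

theorem dominating_iff_forall_exists_sub_mem {S D : Set ℤ} :
    Dominating S D ↔ ∀ m : ℤ, ∃ u ∈ D, m - u ∈ insert 0 S := by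
  refine forall_congr' fun m => ⟨?_, ?_⟩
  · rintro (hm | ⟨u, hu, t, ht, rfl⟩)
    · exact ⟨m, hm, by simp⟩
    · exact ⟨u, hu, by simpa using Or.inr ht⟩
  · rintro ⟨u, hu, h | h⟩
    · exact Or.inl (sub_eq_zero.1 h ▸ hu)
    · exact Or.inr ⟨u, hu, m - u, h, by ring⟩

theorem dominating_setOf_four_dvd (s : ℤ) : Dominating {1, 2, 3, s} {x : ℤ | 4 ∣ x} := by
  refine dominating_iff_forall_exists_sub_mem.2 fun m => ⟨m - m % 4, ?_, ?_⟩
  · change (4 : ℤ) ∣ m - m % 4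
    omega
  · have := Int.emod_nonneg m four_ne_zero
    have := Int.emod_lt_of_pos m four_pos
    simp only [mem_insert_iff, mem_singleton_iff]
    omega

theorem Dominating.reflect {s : ℤ} {D : Set ℤ} (hD : Dominating {1, 2, 3, s} D) :
    Dominating {1, 2, 3, 3 - s} {x | -1 - x ∈ D} := by
  rw [dominating_iff_forall_exists_sub_mem] at hD ⊢
  intro m
  obtain ⟨u, hu, hmu⟩ := hD (2 - m)
  refine ⟨-1 - u, by simpa using hu, ?_⟩
  simp only [mem_insert_iff, mem_singleton_iff] at hmu ⊢
  omega

theorem ncard_inter_Ico_add_ncard_inter_Ico {α : Type*} [LinearOrder α] [LocallyFiniteOrder α]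
    (D : Set α) {a b c : α} (hab : a ≤ b) (hbc : b ≤ c) :
    (D ∩ Ico a b).ncard + (D ∩ Ico b c).ncard = (D ∩ Ico a c).ncard := by
  rw [← Ico_union_Ico_eq_Ico hab hbc, inter_union_distrib_left, ncard_union_eq]
  exact Ico_disjoint_Ico_same.mono inter_subset_right inter_subset_right

theorem ncard_setOf_neg_one_sub_mem_inter_Ico (D : Set ℤ) (a b : ℤ) :
    ({x | -1 - x ∈ D} ∩ Ico a b).ncard = (D ∩ Ico (-b) (-a)).ncard := by
  have : {x | -1 - x ∈ D} ∩ Ico a b = (fun x => -1 - x) '' (D ∩ Ico (-b) (-a)) := by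
    ext x
    simp only [mem_inter_iff, mem_Ico, mem_image]
    constructor
    · rintro ⟨hx, hax, hxb⟩
      exact ⟨-1 - x, ⟨hx, by omega, by omega⟩, by ring⟩
    · rintro ⟨y, ⟨hy, hby, hya⟩, rfl⟩
      exact ⟨by simpa using hy, by omega, by omega⟩
  rw [this, ncard_image_of_injective _ fun x y h => by simpa using h]

theorem le_mul_ncard_inter_Ico_add {D : Set ℤ} {L J : ℕ} (hL : 0 < L)
    (hpeel : ∀ m : ℤ, ∃ j : ℕ, 0 < j ∧ j ≤ J ∧ j ≤ (D ∩ Ico (m - L * j) m).ncard)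
    (a : ℤ) (n : ℕ) : n ≤ L * (D ∩ Ico a (a + n)).ncard + L * J := by
  induction n using Nat.strong_induction_on with
  | _ n ih =>
  by_cases hn : n < L * J
  · omega
  obtain ⟨j, hj, hjJ, hblock⟩ := hpeel (a + n)
  have hLj : L * j ≤ n := (Nat.mul_le_mul_left L hjJ).trans (not_lt.1 hn)
  have hrest := ih (n - L * j) (by have := Nat.mul_pos hL hj; omega)
  have hcast : a + ((n - L * j : ℕ) : ℤ) = a + n - L * j := by push_cast [Nat.cast_sub hLj]; ring
  rw [hcast] at hrest
  rw [← ncard_inter_Ico_add_ncard_inter_Ico D (by omega : a ≤ a + n - L * j) (by omega), mul_add]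
  have := Nat.mul_le_mul_left L hblock
  omega

theorem exists_peel_of_dominating {s : ℤ} (hs5 : 5 ≤ s) (hs6 : s ≤ 6) {D : Set ℤ}
    (hD : Dominating {1, 2, 3, s} D) (m : ℤ) :
    ∃ j : ℕ, 0 < j ∧ j ≤ 2 ∧ j ≤ (D ∩ Ico (m - 4 * j) m).ncard := by
  rw [dominating_iff_forall_exists_sub_mem] at hD
  obtain ⟨u, hu, hmu⟩ := hD (m - 1)
  simp only [mem_insert_iff, mem_singleton_iff] at hmu
  by_cases hnear : m - 1 - u ≤ 3
  · refine ⟨1, one_pos, one_le_two, (ncard_pos).2 ⟨u, hu, ?_⟩⟩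
    simp only [mem_Ico]
    omega
  · obtain ⟨v, hv, hmv⟩ := hD (m - 2)
    simp only [mem_insert_iff, mem_singleton_iff] at hmv
    -- `u = m - 1 - s`, and `s ≠ 4` keeps `v` away from it
    refine ⟨2, two_pos, le_rfl, (one_lt_ncard_iff).2 ⟨u, v, ⟨hu, ?_⟩, ⟨hv, ?_⟩, by omega⟩⟩ <;>
      simp only [mem_Ico] <;> omega

theorem tendsto_const_div_two_mul_add_one (c : ℝ) :
    Tendsto (fun n : ℕ => c / (2 * (n : ℝ) + 1)) atTop (𝓝 0) :=
  tendsto_const_nhds.div_atTop <| tendsto_atTop_add_const_right _ 1 <|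
    tendsto_natCast_atTop_atTop.const_mul_atTop two_pos

theorem ncard_inter_Icc_le (D : Set ℤ) (n : ℕ) : (D ∩ Icc (-(n : ℤ)) n).ncard ≤ 2 * n + 1 := by
  refine (ncard_le_ncard inter_subset_right (finite_Icc _ _)).trans_eq ?_
  rw [← Finset.coe_Icc, ncard_coe_finset, Int.card_Icc]
  omega

theorem one_div_le_lowerDensity {D : Set ℤ} {L C : ℕ} (hL : 0 < L)
    (h : ∀ n : ℕ, 2 * n + 1 ≤ L * (D ∩ Icc (-(n : ℤ)) n).ncard + C) :
    1 / (L : ℝ) ≤ lowerDensity D := by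
  have hL' : (0 : ℝ) < L := by exact_mod_cast hL
  have hlow : ∀ n : ℕ, 1 / (L : ℝ) - C / L / (2 * n + 1) ≤
      (D ∩ Icc (-(n : ℤ)) n).ncard / (2 * n + 1) := by
    intro n
    have hn := (Nat.cast_le (α := ℝ)).2 (h n)
    push_cast at hn
    calc 1 / (L : ℝ) - C / L / (2 * n + 1) = (2 * n + 1 - C) / L / (2 * n + 1) := by
          field_simp
      _ ≤ _ := by
          gcongr
          rw [div_le_iff₀ hL']
          linarith
  have hlim : Tendsto (fun n : ℕ => 1 / (L : ℝ) - C / L / (2 * n + 1)) atTop (𝓝 (1 / L)) := by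
    simpa using tendsto_const_nhds.sub (tendsto_const_div_two_mul_add_one (C / L))
  have hcobdd : IsCoboundedUnder (· ≥ ·) atTop
      fun n : ℕ => ((D ∩ Icc (-(n : ℤ)) n).ncard : ℝ) / (2 * n + 1) := by
    refine isCoboundedUnder_ge_of_le atTop (x := 1) fun n => div_le_one_of_le₀ ?_ (by positivity)
    exact_mod_cast ncard_inter_Icc_le D n
  calc 1 / (L : ℝ) = liminf (fun n : ℕ => 1 / (L : ℝ) - C / L / (2 * n + 1)) atTop :=
        hlim.liminf_eq.symm
    _ ≤ lowerDensity D := liminf_le_liminf (.of_forall hlow) hlim.isBoundedUnder_ge hcobdd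

theorem lowerDensity_le_one_div {D : Set ℤ} {L C : ℕ} (hL : 0 < L)
    (h : ∀ n : ℕ, L * (D ∩ Icc (-(n : ℤ)) n).ncard ≤ 2 * n + 1 + C) :
    lowerDensity D ≤ 1 / (L : ℝ) := by
  have hL' : (0 : ℝ) < L := by exact_mod_cast hL
  have hup : ∀ n : ℕ, ((D ∩ Icc (-(n : ℤ)) n).ncard : ℝ) / (2 * n + 1) ≤
      1 / (L : ℝ) + C / L / (2 * n + 1) := by
    intro n
    have hn := (Nat.cast_le (α := ℝ)).2 (h n)
    push_cast at hn
    calc ((D ∩ Icc (-(n : ℤ)) n).ncard : ℝ) / (2 * n + 1) ≤ (2 * n + 1 + C) / L / (2 * n + 1) := by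
          gcongr
          rw [le_div_iff₀ hL']
          linarith
      _ = 1 / (L : ℝ) + C / L / (2 * n + 1) := by
          field_simp
  have hlim : Tendsto (fun n : ℕ => 1 / (L : ℝ) + C / L / (2 * n + 1)) atTop (𝓝 (1 / L)) := by
    simpa using tendsto_const_nhds.add (tendsto_const_div_two_mul_add_one (C / L))
  have hbdd : IsBoundedUnder (· ≥ ·) atTop
      fun n : ℕ => ((D ∩ Icc (-(n : ℤ)) n).ncard : ℝ) / (2 * n + 1) :=
    isBoundedUnder_of ⟨0, fun n => by positivity⟩
  calc lowerDensity D ≤ liminf (fun n : ℕ => 1 / (L : ℝ) + C / L / (2 * n + 1)) atTop :=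
        liminf_le_liminf (.of_forall hup) hbdd hlim.isCoboundedUnder_ge
    _ = 1 / L := hlim.liminf_eq

theorem ncard_setOf_four_dvd_inter_Icc_le (n : ℕ) :
    ({x : ℤ | 4 ∣ x} ∩ Icc (-(n : ℤ)) n).ncard ≤ 2 * (n / 4) + 1 := by
  have hsub : {x : ℤ | 4 ∣ x} ∩ Icc (-(n : ℤ)) n ⊆
      (fun k : ℤ => 4 * k) '' Icc (-((n / 4 : ℕ) : ℤ)) ((n / 4 : ℕ) : ℤ) := by
    rintro x ⟨⟨k, rfl⟩, hxn, hnx⟩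
    exact ⟨k, ⟨by omega, by omega⟩, rfl⟩
  calc ({x : ℤ | 4 ∣ x} ∩ Icc (-(n : ℤ)) n).ncard
      ≤ ((fun k : ℤ => 4 * k) '' Icc (-((n / 4 : ℕ) : ℤ)) ((n / 4 : ℕ) : ℤ)).ncard :=
        ncard_le_ncard hsub ((finite_Icc _ _).image _)
    _ ≤ (Icc (-((n / 4 : ℕ) : ℤ)) ((n / 4 : ℕ) : ℤ)).ncard := ncard_image_le (finite_Icc _ _)
    _ = 2 * (n / 4) + 1 := by
        rw [← Finset.coe_Icc, ncard_coe_finset, Int.card_Icc]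
        omega

theorem le_four_mul_ncard_inter_Icc_add {s : ℤ} (hs : s ∈ ({-3, -2, 5, 6} : Set ℤ)) {D : Set ℤ}
    (hD : Dominating {1, 2, 3, s} D) (n : ℕ) :
    2 * n + 1 ≤ 4 * (D ∩ Icc (-(n : ℤ)) n).ncard + 8 := by
  have hwindow : ∀ (a : ℤ) (k : ℕ), k ≤ 4 * (D ∩ Ico a (a + k)).ncard + 4 * 2 := by
    simp only [mem_insert_iff, mem_singleton_iff] at hs
    rcases (by omega : 5 ≤ s ∧ s ≤ 6 ∨ 5 ≤ 3 - s ∧ 3 - s ≤ 6) with ⟨h5, h6⟩ | ⟨h5, h6⟩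
    · exact le_mul_ncard_inter_Ico_add four_pos (exists_peel_of_dominating h5 h6 hD)
    · intro a k
      have := le_mul_ncard_inter_Ico_add four_pos
        (exists_peel_of_dominating h5 h6 hD.reflect) (-(a + k)) k
      rwa [ncard_setOf_neg_one_sub_mem_inter_Ico, neg_neg, show -(-(a + k) + k) = a by ring] at this
  have hIcc : Ico (-(n : ℤ)) (-n + ((2 * n + 1 : ℕ) : ℤ)) = Icc (-(n : ℤ)) n := by
    ext x
    simp only [mem_Ico, mem_Icc]
    omega
  have := hwindow (-n) (2 * n + 1)
  rw [hIcc] at this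
  omega

theorem stmt_16 (s : ℤ) (hs : s ∈ ({-3, -2, 5, 6} : Set ℤ)) :
    dominationRatio {1, 2, 3, s} = 1 / 4 := by
  have hlower : ∀ D, Dominating {1, 2, 3, s} D → 1 / 4 ≤ lowerDensity D := fun D hD => by
    simpa using one_div_le_lowerDensity four_pos (le_four_mul_ncard_inter_Icc_add hs hD)
  have hfour : lowerDensity {x : ℤ | 4 ∣ x} ≤ 1 / 4 := by
    refine (lowerDensity_le_one_div (C := 3) four_pos fun n => ?_).trans_eq (by norm_num)
    have := ncard_setOf_four_dvd_inter_Icc_le n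
    omega
  refine IsLeast.csInf_eq ⟨⟨_, dominating_setOf_four_dvd s, ?_⟩, ?_⟩
  · exact le_antisymm hfour (hlower _ (dominating_setOf_four_dvd s))
  · rintro _ ⟨D, hD, rfl⟩
    exact hlower D hD
end

section
/- Let d ≥ 2 and s ∉ [0, d-2] be integers. The integer distance digraph Γ(ℤ, {1,2,…,d-2,s}) has an efficient dominating set if and only if d = 2 or s ≡ -1 (mod d). -/
open Filter

/-!
If `D` is efficient and `d ≥ 3`, the uniqueness of dominators forces `D + (s + 1) ⊆ D` and
`D + (s + 1 - d) ⊆ D`, so `D` contains two points whose difference is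
`gcd(s + 1, d) = (s + 1) x + (s + 1 - d) y`. Two points of `D` cannot differ by an element of
`{1, …, d - 2}`, so this gcd is `d` (a proper divisor of `d` is at most `d - 2`), i.e. `d ∣ s + 1`.
Conversely, `dℤ` is efficient as soon as `{0, 1, …, d - 2, s}` is a complete residue system
mod `d`, and for `d = 2` the set of `m` with `⌊m / s⌋` even is efficient.
-/

lemma sub_mem_insert_zero_iff {S : Set ℤ} {m u : ℤ} : m - u ∈ insert 0 S ↔ u = m ∨ m - u ∈ S := by
  rw [Set.mem_insert_iff, sub_eq_zero, eq_comm]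

namespace EffDominating

variable {S D : Set ℤ}

lemma exists_add_eq (hD : EffDominating S D) (m : ℤ) : ∃ u ∈ D, ∃ t ∈ insert 0 S, m = u + t := by
  obtain ⟨u, ⟨hu, hum⟩, -⟩ := hD m
  exact ⟨u, hu, m - u, sub_mem_insert_zero_iff.2 hum, by ring⟩

lemma eq_of_add_eq (hD : EffDominating S D) {u v t t' : ℤ} (hu : u ∈ D) (hv : v ∈ D)
    (ht : t ∈ insert 0 S) (ht' : t' ∈ insert 0 S) (h : u + t = v + t') : u = v := by
  obtain ⟨w, -, hw⟩ := hD (u + t)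
  have hu' : u = w := hw u ⟨hu, sub_mem_insert_zero_iff.1 (by simpa using ht)⟩
  have hv' : v = w := hw v ⟨hv, sub_mem_insert_zero_iff.1 (by simpa [h] using ht')⟩
  rw [hu', hv']

end EffDominating

lemma effDominating_multiples {S : Set ℤ} {d : ℤ}
    (hS : ∀ m, ∃! t, t ∈ insert 0 S ∧ t ≡ m [ZMOD d]) : EffDominating S {m | d ∣ m} := by
  intro m
  obtain ⟨t, ⟨ht, htm⟩, huniq⟩ := hS m
  refine ⟨m - t, ⟨htm.dvd, sub_mem_insert_zero_iff.1 (by simpa using ht)⟩, ?_⟩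
  rintro v ⟨hv, hvm⟩
  have hv' : m - v ≡ m [ZMOD d] := Int.modEq_iff_dvd.2 (by simpa using hv)
  have := huniq (m - v) ⟨sub_mem_insert_zero_iff.2 hvm, hv'⟩
  omega

lemma effDominating_singleton {s : ℤ} (hs : s ≠ 0) : EffDominating {s} {m | Even (m / s)} := by
  intro m
  have hpred : (m - s) / s = m / s - 1 := by
    rw [sub_eq_add_neg, ← mul_neg_one s, Int.add_mul_ediv_left _ _ hs]; ring
  have hdom : ∀ v, (v = m ∨ m - v ∈ ({s} : Set ℤ)) ↔ v = m ∨ v = m - s := by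
    intro v; rw [Set.mem_singleton_iff]; omega
  simp only [hdom]
  by_cases hm : Even (m / s)
  · refine ⟨m, ⟨hm, Or.inl rfl⟩, ?_⟩
    rintro v ⟨hv, rfl | rfl⟩
    · rfl
    · rw [Set.mem_ofPred_eq, hpred, Int.even_sub_one] at hv
      exact absurd hm hv
  · refine ⟨m - s, ⟨by rwa [Set.mem_ofPred_eq, hpred, Int.even_sub_one], Or.inr rfl⟩, ?_⟩
    rintro v ⟨hv, rfl | rfl⟩
    · exact absurd hv hm
    · rfl

section IntervalUnion

variable {d s : ℤ}

lemma mem_insert_zero_Icc_union_iff (hd : 2 ≤ d) {t : ℤ} :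
    t ∈ insert 0 (Set.Icc 1 (d - 2) ∪ {s}) ↔ (0 ≤ t ∧ t ≤ d - 2) ∨ t = s := by
  simp only [Set.mem_insert_iff, Set.mem_union, Set.mem_Icc, Set.mem_singleton_iff]
  omega

lemma existsUnique_modEq_of_modEq_neg_one (hd : 2 ≤ d) (hs : s ≡ -1 [ZMOD d]) (m : ℤ) :
    ∃! t, t ∈ insert 0 (Set.Icc 1 (d - 2) ∪ {s}) ∧ t ≡ m [ZMOD d] := by
  have hsd : s % d = d - 1 := by
    have h := Int.add_mul_emod_self_left (d - 1) d (-1)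
    rw [show d - 1 + d * -1 = -1 by ring, Int.emod_eq_of_lt (a := d - 1) (by omega) (by omega)] at h
    rw [hs.eq, h]
  have hm0 := Int.emod_nonneg m (show d ≠ 0 by omega)
  have hm1 := Int.emod_lt_of_pos m (show 0 < d by omega)
  simp only [mem_insert_zero_Icc_union_iff hd, Int.ModEq]
  rcases lt_or_eq_of_le (Int.le_sub_one_of_lt hm1) with hlt | heq
  · refine ⟨m % d, ⟨by omega, by rw [Int.emod_eq_of_lt hm0 (by omega)]⟩, ?_⟩
    rintro t ⟨ht | rfl, htm⟩
    · rwa [Int.emod_eq_of_lt (a := t) (by omega) (by omega)] at htm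
    · omega
  · refine ⟨s, ⟨Or.inr rfl, by omega⟩, ?_⟩
    rintro t ⟨ht | rfl, htm⟩
    · rw [Int.emod_eq_of_lt (a := t) (by omega) (by omega)] at htm; omega
    · rfl

variable {D : Set ℤ} {u : ℤ}

lemma add_succ_mem_of_effDominating (hd : 3 ≤ d) (hs : s ∉ Set.Icc 0 (d - 2))
    (hD : EffDominating (Set.Icc 1 (d - 2) ∪ {s}) D) (hu : u ∈ D) : u + (s + 1) ∈ D := by
  rw [Set.mem_Icc, not_and_or, not_le, not_le] at hs
  have hT := fun t => mem_insert_zero_Icc_union_iff (d := d) (s := s) (by omega) (t := t)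
  obtain ⟨w, hw, t, ht, hwt⟩ := hD.exists_add_eq (u + (s + 1))
  rcases (hT t).1 ht with ⟨ht0, htd⟩ | rfl
  · rcases eq_or_lt_of_le ht0 with rfl | ht0
    · rwa [hwt, add_zero]
    · have := hD.eq_of_add_eq hw hu ((hT (t - 1)).2 (by omega)) ((hT s).2 (by omega))
        (by linarith)
      omega
  · have := hD.eq_of_add_eq hu hw ((hT 1).2 (by omega)) ((hT 0).2 (by omega)) (by linarith)
    omega

lemma add_succ_sub_mem_of_effDominating (hd : 3 ≤ d) (hs : s ∉ Set.Icc 0 (d - 2))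
    (hD : EffDominating (Set.Icc 1 (d - 2) ∪ {s}) D) (hu : u ∈ D) : u + (s + 1 - d) ∈ D := by
  rw [Set.mem_Icc, not_and_or, not_le, not_le] at hs
  have hT := fun t => mem_insert_zero_Icc_union_iff (d := d) (s := s) (by omega) (t := t)
  obtain ⟨w, hw, t, ht, hwt⟩ := hD.exists_add_eq (u + (s - 1))
  rcases (hT t).1 ht with ⟨ht0, htd⟩ | rfl
  · rcases lt_or_eq_of_le htd with htd | rfl
    · have := hD.eq_of_add_eq hw hu ((hT (t + 1)).2 (by omega)) ((hT s).2 (by omega))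
        (by linarith)
      omega
    · rwa [show u + (s + 1 - d) = w by linarith]
  · have := hD.eq_of_add_eq hw hu ((hT 1).2 (by omega)) ((hT 0).2 (by omega)) (by linarith)
    omega

end IntervalUnion

section Translation

variable {D : Set ℤ} {a b : ℤ}

lemma add_natCast_mul_mem (ha : ∀ u ∈ D, u + a ∈ D) {u : ℤ} (hu : u ∈ D) (n : ℕ) :
    u + n * a ∈ D := by
  induction n with
  | zero => simpa using hu
  | succ n ih => simpa [add_mul, add_assoc] using ha _ ih

lemma exists_add_linear_combination_mem (hne : D.Nonempty) (ha : ∀ u ∈ D, u + a ∈ D)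
    (hb : ∀ u ∈ D, u + b ∈ D) (P Q : ℤ) : ∃ w ∈ D, w + (P * a + Q * b) ∈ D := by
  obtain ⟨u, hu⟩ := hne
  have hab : ∀ i j : ℕ, u + (i * a + j * b) ∈ D := fun i j => by
    simpa [add_assoc] using add_natCast_mul_mem hb (add_natCast_mul_mem ha hu i) j
  refine ⟨_, hab (-P).toNat (-Q).toNat, ?_⟩
  convert hab P.toNat Q.toNat using 1
  linear_combination (-a) * P.toNat_sub_toNat_neg + (-b) * Q.toNat_sub_toNat_neg

end Translation

lemma Int.le_sub_two_of_dvd_of_ne {g d : ℤ} (hd : 3 ≤ d) (hg : 0 < g) (hgd : g ∣ d)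
    (hne : g ≠ d) : g ≤ d - 2 := by
  obtain ⟨k, rfl⟩ := hgd
  have hk0 : 0 < k := pos_of_mul_pos_right (by omega : 0 < g * k) hg.le
  have hk1 : k ≠ 1 := by rintro rfl; simp at hne
  nlinarith [show 2 ≤ k by omega]

theorem modEq_neg_one_of_effDominating {d s : ℤ} {D : Set ℤ} (hd : 3 ≤ d)
    (hs : s ∉ Set.Icc 0 (d - 2)) (hD : EffDominating (Set.Icc 1 (d - 2) ∪ {s}) D) :
    s ≡ -1 [ZMOD d] := by
  by_contra hmod
  set g : ℤ := (Int.gcd (-1 - s) d : ℤ) with hg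
  have hg0 : 0 < g := Int.natCast_pos.2 (Int.gcd_pos_of_ne_zero_right _ (show d ≠ 0 by omega))
  have hgd : g ≠ d := fun h => hmod (Int.modEq_iff_dvd.2 (h ▸ Int.gcd_dvd_left _ _))
  have hgd2 := Int.le_sub_two_of_dvd_of_ne hd hg0 (Int.gcd_dvd_right _ _) hgd
  obtain ⟨u, hu, -⟩ := hD.exists_add_eq 0
  obtain ⟨w, hw, hwg⟩ := exists_add_linear_combination_mem ⟨u, hu⟩
    (fun _ => add_succ_mem_of_effDominating hd hs hD)
    (fun _ => add_succ_sub_mem_of_effDominating hd hs hD)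
    (Int.gcdB (-1 - s) d - Int.gcdA (-1 - s) d) (-Int.gcdB (-1 - s) d)
  rw [show _ * (s + 1) + _ * (s + 1 - d) = g by rw [hg, Int.gcd_eq_gcd_ab]; ring] at hwg
  have hT := fun t => mem_insert_zero_Icc_union_iff (d := d) (s := s) (by omega) (t := t)
  have := hD.eq_of_add_eq hw hwg ((hT g).2 (by omega)) ((hT 0).2 (by omega)) (by ring)
  omega

theorem stmt_17 (d s : ℤ) (hd : 2 ≤ d) (hs : s ∉ Set.Icc 0 (d - 2)) :
    (∃ D : Set ℤ, EffDominating (Set.Icc 1 (d - 2) ∪ {s}) D) ↔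
      d = 2 ∨ s ≡ -1 [ZMOD d] := by
  constructor
  · rintro ⟨D, hD⟩
    rcases eq_or_lt_of_le hd with rfl | hd3
    · exact Or.inl rfl
    · exact Or.inr (modEq_neg_one_of_effDominating hd3 hs hD)
  · rintro (rfl | hmod)
    · have hs0 : s ≠ 0 := by rintro rfl; simp at hs
      refine ⟨{m | Even (m / s)}, ?_⟩
      rw [show (2 : ℤ) - 2 = 0 by norm_num, Set.Icc_eq_empty (by norm_num), Set.empty_union]
      exact effDominating_singleton hs0
    · exact ⟨_, effDominating_multiples (existsUnique_modEq_of_modEq_neg_one hd hmod)⟩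
end
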